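/- arXiv:1810.02270 — 3 statements merged into one kernel-verified Lean document; each statement's English description precedes it below -/
import Mathlib

section
/- Let t be a binary search tree and let x and y be keys occupying adjacent positions in the in-order traversal of t. Then either x is an ancestor of y in t, or y is an ancestor of x in t. -/
/-- Binary trees over a type `α`. -/
inductive BTree (α : Type*) where
  | nil : BTree α
  | node (l : BTree α) (a : α) (r : BTree α) : BTree α
  deriving DecidableEq

namespace BTree

variable {α : Type*}

/-- In-order traversal. -/
def inorder : BTree α → List α
  | nil => []
  | node l a r => inorder l ++ [a] ++ inorder r

/-- Key membership in a tree. -/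
def Mem : BTree α → α → Prop
  | nil, _ => False
  | node l a r, x => Mem l x ∨ x = a ∨ Mem r x

/-- `IsSubtree s t` means `s` occurs as a subtree of `t`. -/
inductive IsSubtree : BTree α → BTree α → Prop
  | refl (t : BTree α) : IsSubtree t t
  | left {s l r : BTree α} {a : α} : IsSubtree s l → IsSubtree s (node l a r)
  | right {s l r : BTree α} {a : α} : IsSubtree s r → IsSubtree s (node l a r)

/-- `x` and `y` occupy adjacent positions in the list `L` (`x` immediately before `y`). -/
def Adjacent (L : List α) (x y : α) : Prop :=
  ∃ i : ℕ, L[i]? = some x ∧ L[i + 1]? = some y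

variable [LinearOrder α]

/-- The binary-search-tree property: at every node, all keys of the left subtree are
smaller than the root key and all keys of the right subtree are larger. -/
def IsBST : BTree α → Prop
  | nil => True
  | node l a r => (∀ x, Mem l x → x < a) ∧ (∀ x, Mem r x → a < x) ∧ IsBST l ∧ IsBST r

/-- `Ancestor t x y`: the key `x` is an ancestor of the key `y` in `t`, i.e. `y` occurs
in a proper subtree of the subtree of `t` rooted at `x`. -/
def Ancestor (t : BTree α) (x y : α) : Prop :=
  ∃ l r : BTree α, IsSubtree (node l x r) t ∧ (Mem l y ∨ Mem r y)

/-- Depth (number of edges from the root) of a key in a binary search tree,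
computed by the standard search path. -/
def depth : BTree α → α → ℕ
  | nil, _ => 0
  | node l a r, x => if x = a then 0 else if x < a then depth l x + 1 else depth r x + 1

end BTree

/-!
Consecutive keys in the in-order list of `node l a r` are either consecutive in `inorder l`
or in `inorder r`, or one of them is the root `a` and the other lies in `l` or `r`, below `a`.
Hence, by induction on the tree, "one is an ancestor of the other" holds along the whole
chain `inorder t`.
-/

namespace BTree

variable {α : Type*}

theorem mem_of_mem_inorder {t : BTree α} {x : α} (h : x ∈ inorder t) : Mem t x := by
  induction t with
  | nil => simp [inorder] at h
  | node l a r ihl ihr =>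
    simp only [inorder, List.mem_append, List.mem_singleton] at h
    rcases h with (h | rfl) | h
    · exact Or.inl (ihl h)
    · exact Or.inr (Or.inl rfl)
    · exact Or.inr (Or.inr (ihr h))

theorem _root_.List.IsChain.rel_of_adjacent {R : α → α → Prop} {L : List α} {x y : α}
    (hL : L.IsChain R) (h : Adjacent L x y) : R x y := by
  obtain ⟨i, hx, hy⟩ := h
  obtain ⟨hi, rfl⟩ := List.getElem?_eq_some_iff.mp hy
  obtain ⟨-, rfl⟩ := List.getElem?_eq_some_iff.mp hx
  exact hL.getElem i hi

theorem Ancestor.node_left {l r : BTree α} {a x y : α} (h : Ancestor l x y) :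
    Ancestor (node l a r) x y := by
  obtain ⟨l', r', hs, hm⟩ := h
  exact ⟨l', r', .left hs, hm⟩

theorem Ancestor.node_right {l r : BTree α} {a x y : α} (h : Ancestor r x y) :
    Ancestor (node l a r) x y := by
  obtain ⟨l', r', hs, hm⟩ := h
  exact ⟨l', r', .right hs, hm⟩

theorem ancestor_node_of_mem_left {l r : BTree α} {a y : α} (h : Mem l y) :
    Ancestor (node l a r) a y :=
  ⟨l, r, .refl _, Or.inl h⟩

theorem ancestor_node_of_mem_right {l r : BTree α} {a y : α} (h : Mem r y) :
    Ancestor (node l a r) a y :=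
  ⟨l, r, .refl _, Or.inr h⟩

theorem isChain_inorder_ancestor (t : BTree α) :
    (inorder t).IsChain fun x y => Ancestor t x y ∨ Ancestor t y x := by
  induction t with
  | nil => exact .nil
  | node l a r ihl ihr =>
    rw [inorder]
    refine ((ihl.imp ?_).append (List.isChain_singleton a) ?_).append (ihr.imp ?_) ?_
    · exact fun _ _ h => h.imp Ancestor.node_left Ancestor.node_left
    · intro x hx y hy
      obtain rfl : a = y := by simpa using hy
      exact Or.inr (ancestor_node_of_mem_left (mem_of_mem_inorder (List.mem_of_getLast? hx)))
    · exact fun _ _ h => h.imp Ancestor.node_right Ancestor.node_right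
    · intro x hx y hy
      obtain rfl : a = x := by simpa using hx
      exact Or.inl (ancestor_node_of_mem_right (mem_of_mem_inorder (List.mem_of_head? hy)))

variable [LinearOrder α]

theorem ancestor_of_adjacent_general (t : BTree α) (x y : α)
    (hadj : Adjacent (inorder t) x y) :
    Ancestor t x y ∨ Ancestor t y x :=
  (isChain_inorder_ancestor t).rel_of_adjacent hadj

/-- of two keys adjacent in the in-order traversal of a BST, one is an
ancestor of the other. -/
theorem ancestor_of_adjacent (t : BTree α) (ht : IsBST t) (x y : α)
    (hadj : Adjacent (inorder t) x y) :
    Ancestor t x y ∨ Ancestor t y x :=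
  ancestor_of_adjacent_general t x y hadj

end BTree
end

section
/- Let t be a binary search tree and let x and y be keys occupying adjacent positions in the in-order traversal of t. Then the depth of x in t is not equal to the depth of y in t. -/
/-! Split the in-order traversal of `node l a r` as `inorder l ++ a :: inorder r`. Two adjacent
keys either both lie in one subtree, where the search path descends into that subtree for both
and induction applies, or one of them is the root `a`, of depth `0`, while the other lies
strictly below it. -/

namespace BTree

variable {α : Type*}

theorem inorder_node (l : BTree α) (a : α) (r : BTree α) :
    inorder (node l a r) = inorder l ++ a :: inorder r := by
  simp [inorder]

theorem Adjacent.mem_left {L : List α} {x y : α} (h : Adjacent L x y) : x ∈ L :=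
  let ⟨_, hx, _⟩ := h; List.mem_of_getElem? hx

theorem Adjacent.mem_right {L : List α} {x y : α} (h : Adjacent L x y) : y ∈ L :=
  let ⟨_, _, hy⟩ := h; List.mem_of_getElem? hy

theorem Adjacent.append_cons_cases {L R : List α} {a x y : α}
    (h : Adjacent (L ++ a :: R) x y) :
    Adjacent L x y ∨ (x ∈ L ∧ y = a) ∨ (x = a ∧ y ∈ R) ∨ Adjacent R x y := by
  obtain ⟨i, hx, hy⟩ := h
  rcases lt_trichotomy (i + 1) L.length with hi | hi | hi
  · left
    rw [List.getElem?_append_left (by omega)] at hx hy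
    exact ⟨i, hx, hy⟩
  · right; left
    rw [List.getElem?_append_left (by omega)] at hx
    rw [List.getElem?_append_right (by omega), hi, Nat.sub_self] at hy
    exact ⟨List.mem_of_getElem? hx, by simpa using hy.symm⟩
  · right; right
    obtain ⟨j, rfl⟩ : ∃ j, i = L.length + j := ⟨i - L.length, by omega⟩
    rw [List.getElem?_append_right (by omega)] at hx hy
    rw [Nat.add_sub_cancel_left] at hx
    rw [Nat.add_assoc, Nat.add_sub_cancel_left] at hy
    cases j with
    | zero => exact Or.inl ⟨by simpa using hx.symm, List.mem_of_getElem? hy⟩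
    | succ k => exact Or.inr ⟨k, hx, hy⟩

theorem mem_inorder {t : BTree α} {x : α} : x ∈ inorder t ↔ Mem t x := by
  induction t with
  | nil => simp [inorder, Mem]
  | node l a r ihl ihr => simp [inorder, Mem, ihl, ihr]

variable [LinearOrder α]

section Node

variable {l r : BTree α} {a x : α}

theorem depth_node_self : depth (node l a r) a = 0 := by
  simp [depth]

theorem depth_node_of_lt (h : x < a) : depth (node l a r) x = depth l x + 1 := by
  simp [depth, h, h.ne]

theorem depth_node_of_gt (h : a < x) : depth (node l a r) x = depth r x + 1 := by
  simp [depth, h.ne', h.not_gt]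

end Node

/-- keys adjacent in the in-order traversal of a BST have distinct depths. -/
theorem depth_ne_of_adjacent (t : BTree α) (ht : IsBST t) (x y : α)
    (hadj : Adjacent (inorder t) x y) :
    depth t x ≠ depth t y := by
  induction t generalizing x y with
  | nil => exact absurd hadj.mem_left List.not_mem_nil
  | node l a r ihl ihr =>
    obtain ⟨hl, hr, hbl, hbr⟩ := ht
    have depth_left (z : α) (hz : z ∈ inorder l) : depth (node l a r) z = depth l z + 1 :=
      depth_node_of_lt (hl z (mem_inorder.1 hz))
    have depth_right (z : α) (hz : z ∈ inorder r) : depth (node l a r) z = depth r z + 1 :=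
      depth_node_of_gt (hr z (mem_inorder.1 hz))
    rw [inorder_node] at hadj
    rcases hadj.append_cons_cases with h | ⟨hx, rfl⟩ | ⟨rfl, hy⟩ | h
    · simpa [depth_left x h.mem_left, depth_left y h.mem_right] using ihl hbl x y h
    · simp [depth_left x hx, depth_node_self]
    · simp [depth_right y hy, depth_node_self]
    · simpa [depth_right x h.mem_left, depth_right y h.mem_right] using ihr hbr x y h

end BTree
end

section
/- Let t be a binary search tree and let x and y be keys occupying adjacent positions in the in-order traversal of t. Then it is not the case that both the subtree of t rooted at x and the subtree of t rooted at y are complete knots, i.e., at least one of the two subtrees has an empty left child or an empty right child. -/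
namespace BTree

variable {α : Type*}

lemma mem_inorder_iff {t : BTree α} {z : α} : z ∈ inorder t ↔ Mem t z := by
  induction t with
  | nil => simp [inorder, Mem]
  | node l a r ihl ihr => simp [inorder, Mem, ihl, ihr]

lemma inorder_eq_nil_iff {t : BTree α} : inorder t = [] ↔ t = nil := by
  cases t <;> simp [inorder]

lemma IsSubtree.mem {s t : BTree α} (h : IsSubtree s t) {z : α} (hz : Mem s z) : Mem t z := by
  induction h with
  | refl => exact hz
  | left _ ih => exact Or.inl ih
  | right _ ih => exact Or.inr (Or.inr ih)

lemma IsSubtree.inorder_infix {s t : BTree α} (h : IsSubtree s t) :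
    inorder s <:+: inorder t := by
  induction h with
  | refl => exact List.infix_refl _
  | @left _ r a _ ih => exact ih.trans ⟨[], [a] ++ inorder r, by simp [inorder]⟩
  | @right l _ a _ ih => exact ih.trans ⟨inorder l ++ [a], [], by simp [inorder]⟩

lemma adjacent_iff_infix {L : List α} {x y : α} : Adjacent L x y ↔ [x, y] <:+: L := by
  rw [List.infix_iff_getElem?]
  constructor
  · rintro ⟨i, hx, hy⟩
    refine ⟨i, ?_, fun j hj => ?_⟩
    · have := (List.getElem?_eq_some_iff.1 hy).1
      simp only [List.length_cons, List.length_nil]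
      omega
    · simp only [List.length_cons, List.length_nil] at hj
      interval_cases j <;> simpa [Nat.add_comm] using ‹_›
  · rintro ⟨k, -, h⟩
    exact ⟨k, by simpa using h 0 (by simp), by simpa [Nat.add_comm] using h 1 (by simp)⟩

lemma Adjacent.right_unique {L : List α} (hL : L.Nodup) {x y z : α}
    (hy : Adjacent L x y) (hz : Adjacent L x z) : y = z := by
  obtain ⟨i, hi, hiy⟩ := hy
  obtain ⟨j, hj, hjz⟩ := hz
  obtain rfl : i = j :=
    (List.getElem?_inj (List.getElem?_eq_some_iff.1 hi).1 hL).1 (hi.trans hj.symm)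
  simpa using hiy.symm.trans hjz

lemma Adjacent.left_unique {L : List α} (hL : L.Nodup) {x y z : α}
    (hx : Adjacent L x z) (hy : Adjacent L y z) : x = y := by
  obtain ⟨i, hix, hi⟩ := hx
  obtain ⟨j, hjy, hj⟩ := hy
  obtain rfl : i = j := by
    have := (List.getElem?_inj (List.getElem?_eq_some_iff.1 hi).1 hL).1 (hi.trans hj.symm)
    omega
  simpa using hix.symm.trans hjy

lemma IsSubtree.mem_right_of_adjacent {t l r : BTree α} {x y : α} (hnd : (inorder t).Nodup)
    (h : IsSubtree (node l x r) t) (hr : r ≠ nil) (hxy : Adjacent (inorder t) x y) :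
    Mem r y := by
  obtain ⟨z, zs, hrz⟩ := List.exists_cons_of_ne_nil (mt inorder_eq_nil_iff.1 hr)
  have hxz : Adjacent (inorder t) x z := by
    refine adjacent_iff_infix.2 (List.IsInfix.trans ?_ h.inorder_infix)
    simpa [inorder, hrz] using List.infix_append (inorder l) [x, z] zs
  rw [← mem_inorder_iff, hrz, hxy.right_unique hnd hxz]
  exact List.mem_cons_self

lemma IsSubtree.mem_left_of_adjacent {t l r : BTree α} {x y : α} (hnd : (inorder t).Nodup)
    (h : IsSubtree (node l y r) t) (hl : l ≠ nil) (hxy : Adjacent (inorder t) x y) :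
    Mem l x := by
  obtain ⟨zs, z, hlz⟩ := List.eq_nil_or_concat (inorder l) |>.resolve_left
    (mt inorder_eq_nil_iff.1 hl)
  have hzy : Adjacent (inorder t) z y := by
    refine adjacent_iff_infix.2 (List.IsInfix.trans ?_ h.inorder_infix)
    simpa [inorder, hlz] using List.infix_append zs [z, y] (inorder r)
  rw [← mem_inorder_iff, hlz, hxy.left_unique hnd hzy]
  simp

variable [LinearOrder α]

lemma IsBST.of_isSubtree {s t : BTree α} (ht : IsBST t) (h : IsSubtree s t) : IsBST s := by
  induction h with
  | refl => exact ht
  | left _ ih => exact ih ht.2.2.1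
  | right _ ih => exact ih ht.2.2.2

lemma IsBST.pairwise_lt_inorder {t : BTree α} (ht : IsBST t) : (inorder t).Pairwise (· < ·) := by
  induction t with
  | nil => simp [inorder]
  | node l a r ihl ihr =>
    obtain ⟨hl, hr, hbl, hbr⟩ := ht
    simp only [inorder, List.append_assoc, List.singleton_append, List.pairwise_append,
      List.pairwise_cons, List.mem_cons, mem_inorder_iff]
    refine ⟨ihl hbl, ⟨hr, ihr hbr⟩, fun u hu v hv => ?_⟩
    rcases hv with rfl | hv
    exacts [hl u hu, (hl u hu).trans (hr v hv)]

lemma IsBST.nodup_inorder {t : BTree α} (ht : IsBST t) : (inorder t).Nodup :=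
  ht.pairwise_lt_inorder.nodup

lemma IsBST.not_mem_right {l r : BTree α} {a : α} (ht : IsBST (node l a r)) : ¬Mem r a :=
  fun h => lt_irrefl a (ht.2.1 a h)

lemma IsBST.eq_of_isSubtree_of_mem {s l r : BTree α} {a : α} (ht : IsBST (node l a r))
    (h : IsSubtree s (node l a r)) (ha : Mem s a) : s = node l a r := by
  cases h with
  | refl => rfl
  | left h => exact absurd (ht.1 a (h.mem ha)) (lt_irrefl a)
  | right h => exact absurd (ht.2.1 a (h.mem ha)) (lt_irrefl a)

lemma IsBST.isSubtree_total {t s₁ s₂ : BTree α} (ht : IsBST t) (h₁ : IsSubtree s₁ t)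
    (h₂ : IsSubtree s₂ t) {z : α} (hz₁ : Mem s₁ z) (hz₂ : Mem s₂ z) :
    IsSubtree s₁ s₂ ∨ IsSubtree s₂ s₁ := by
  induction t with
  | nil => cases h₁; exact Or.inr h₂
  | node l a r ihl ihr =>
    cases h₁ with
    | refl => exact Or.inr h₂
    | left h₁ =>
      cases h₂ with
      | refl => exact Or.inl (.left h₁)
      | left h₂ => exact ihl ht.2.2.1 h₁ h₂
      | right h₂ =>
        exact absurd ((ht.1 z (h₁.mem hz₁)).trans (ht.2.1 z (h₂.mem hz₂))) (lt_irrefl z)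
    | right h₁ =>
      cases h₂ with
      | refl => exact Or.inl (.right h₁)
      | left h₂ =>
        exact absurd ((ht.1 z (h₂.mem hz₂)).trans (ht.2.1 z (h₁.mem hz₁))) (lt_irrefl z)
      | right h₂ => exact ihr ht.2.2.2 h₁ h₂

lemma IsBST.eq_of_isSubtree_of_mem_root {t l r l' r' : BTree α} {a b : α} (ht : IsBST t)
    (h : IsSubtree (node l a r) t) (h' : IsSubtree (node l' b r') t)
    (ha : Mem (node l' b r') a) (hb : Mem (node l a r) b) : node l a r = node l' b r' := by
  rcases ht.isSubtree_total h h' (z := a) (Or.inr (Or.inl rfl)) ha with hs | hs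
  · exact (ht.of_isSubtree h').eq_of_isSubtree_of_mem hs hb
  · exact ((ht.of_isSubtree h).eq_of_isSubtree_of_mem hs ha).symm

/-- two keys adjacent in the in-order traversal of a BST cannot both be
complete knots; at least one of their rooted subtrees has an empty child. -/
theorem not_both_complete_knots (t : BTree α) (ht : IsBST t) (x y : α)
    (hadj : Adjacent (inorder t) x y) (lx rx ly ry : BTree α)
    (hx : IsSubtree (node lx x rx) t) (hy : IsSubtree (node ly y ry) t) :
    lx = nil ∨ rx = nil ∨ ly = nil ∨ ry = nil := by
  by_contra! hknots
  obtain ⟨-, hrx, hly, -⟩ := hknots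
  have hyrx : Mem rx y := hx.mem_right_of_adjacent ht.nodup_inorder hrx hadj
  have hxly : Mem ly x := hy.mem_left_of_adjacent ht.nodup_inorder hly hadj
  obtain ⟨-, rfl, rfl⟩ := node.inj <|
    ht.eq_of_isSubtree_of_mem_root hx hy (Or.inl hxly) (Or.inr (Or.inr hyrx))
  exact (ht.of_isSubtree hx).not_mem_right hyrx

end BTree
end
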